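/- arXiv:1706.01970 — 3 statements merged into one kernel-verified Lean document; each statement's English description precedes it below -/
import Mathlib

section
/- If N is a product of n distinct primes, then the number of unordered triples (A,B,C) of positive integers with A ≤ B ≤ C and A·B·C = N equals (3^{n-1}+1)/2. -/
/-!
For squarefree `N` with `n` prime factors, an ordered triple with product `N` is the same as a
distribution of the `n` primes among three slots, so there are `3 ^ n` of them. Two equal entries
of such a triple square-divide `N`, hence are both `1`: the only ordered triples with a repeated
entry are the three arrangements of `(1, 1, N)`. The other `3 ^ n - 3` have distinct entries and
fall into classes of six under permutation, each containing exactly one increasing triple. So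
`O(N) = 1 + (3 ^ n - 3) / 6 = (3 ^ (n - 1) + 1) / 2`.
-/

/-- Number of cuboids with integer edge lengths and volume `N`. -/
noncomputable def cuboidCount (N : ℕ) : ℕ :=
  Set.ncard {t : ℕ × ℕ × ℕ | 0 < t.1 ∧ t.1 ≤ t.2.1 ∧ t.2.1 ≤ t.2.2 ∧ t.1 * t.2.1 * t.2.2 = N}

open Finset Function
open scoped ArithmeticFunction.omega

theorem Nat.squarefree_prod_of_prime {s : Finset ℕ} (hs : ∀ p ∈ s, p.Prime) :
    Squarefree (∏ p ∈ s, p) := by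
  refine squarefree_prod_of_pairwise_isCoprime (fun p hp q hq hpq ↦ ?_)
    fun p hp ↦ (hs p hp).squarefree
  exact Nat.coprime_iff_isRelPrime.1 ((Nat.coprime_primes (hs p hp) (hs q hq)).2 hpq)

theorem Nat.cardDistinctFactors_prod_of_prime {s : Finset ℕ} (hs : ∀ p ∈ s, p.Prime) :
    ω (∏ p ∈ s, p) = #s := by
  rw [ArithmeticFunction.cardDistinctFactors_apply, ← List.card_toFinset, toFinset_factors,
    primeFactors_prod hs]

theorem Tuple.card_eq_factorial_mul_card_strictMono {α : Type*} [LinearOrder α] {d : ℕ}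
    {X : Finset (Fin d → α)} (hperm : ∀ f ∈ X, ∀ σ : Equiv.Perm (Fin d), f ∘ σ ∈ X)
    (hinj : ∀ f ∈ X, Injective f) :
    #X = d.factorial * #{f ∈ X | StrictMono f} := by
  have hcard : d.factorial = #(univ : Finset (Equiv.Perm (Fin d))) := by
    simp [Fintype.card_perm]
  rw [hcard, ← card_product]
  symm
  refine card_bij (fun σg _ ↦ σg.2 ∘ σg.1) ?_ ?_ ?_
  · rintro ⟨σ, g⟩ hσg
    exact hperm g (mem_filter.1 (mem_product.1 hσg).2).1 σ
  · rintro ⟨σ, g⟩ hσg ⟨τ, h⟩ hτh (hgh : g ∘ σ = h ∘ τ)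
    have hg : StrictMono g := (mem_filter.1 (mem_product.1 hσg).2).2
    have hh : StrictMono h := (mem_filter.1 (mem_product.1 hτh).2).2
    obtain rfl : g = h :=
      calc g = (g ∘ σ) ∘ ⇑σ⁻¹ := by simp [comp_assoc]
        _ = (g ∘ σ) ∘ ⇑τ⁻¹ := Tuple.unique_monotone
          (by simpa [comp_assoc] using hg.monotone) (by simpa [hgh, comp_assoc] using hh.monotone)
        _ = h := by simp [hgh, comp_assoc]
    simp only [Prod.mk.injEq, and_true]
    ext i
    exact congrArg Fin.val (hg.injective (congrFun hgh i))
  · intro f hf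
    refine ⟨((Tuple.sort f)⁻¹, f ∘ Tuple.sort f), ?_, by ext i; simp⟩
    refine mem_product.2 ⟨mem_univ _, mem_filter.2 ⟨hperm f hf _, ?_⟩⟩
    exact (Tuple.monotone_sort f).strictMono_of_injective
      ((hinj f hf).comp (Tuple.sort f).injective)

namespace Nat

variable {N : ℕ}

theorem apply_eq_one_of_apply_eq_of_mem_finMulAntidiag {d : ℕ} (hN : Squarefree N)
    {f : Fin d → ℕ} (hf : f ∈ finMulAntidiag d N) {i j : Fin d} (hij : i ≠ j)
    (h : f i = f j) : f i = 1 := by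
  refine Nat.isUnit_iff.1 (hN (f i) ?_)
  calc f i * f i = ∏ k ∈ {i, j}, f k := by rw [prod_pair hij, h]
    _ ∣ ∏ k, f k := prod_dvd_prod_of_subset _ _ _ (subset_univ _)
    _ = N := prod_eq_of_mem_finMulAntidiag hf

theorem not_injective_iff_eq_mulSingle_of_mem_finMulAntidiag (hN : Squarefree N)
    {f : Fin 3 → ℕ} (hf : f ∈ finMulAntidiag 3 N) :
    ¬Injective f ↔ ∃ k, f = Pi.mulSingle k N := by
  constructor
  · intro hf_inj
    obtain ⟨i, j, hij, hne⟩ := not_injective_iff.1 hf_inj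
    obtain ⟨k, hk⟩ :=
      (by decide : ∀ i j : Fin 3, i ≠ j → ∃ k, ∀ l ≠ k, l = i ∨ l = j) i j hne
    have hone : ∀ l ≠ k, f l = 1 := by
      intro l hl
      have hi := apply_eq_one_of_apply_eq_of_mem_finMulAntidiag hN hf hne hij
      rcases hk l hl with rfl | rfl
      exacts [hi, hij ▸ hi]
    have hfk : f k = N := by
      rw [← prod_eq_of_mem_finMulAntidiag hf, prod_eq_single k (fun l _ ↦ hone l) (by simp)]
    refine ⟨k, funext fun l ↦ ?_⟩
    rw [Pi.mulSingle_apply]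
    split_ifs with hl
    exacts [hl ▸ hfk, hone l hl]
  · rintro ⟨k, rfl⟩
    obtain ⟨i, j, hij, hik, hjk⟩ :=
      (by decide : ∀ k : Fin 3, ∃ i j, i ≠ j ∧ i ≠ k ∧ j ≠ k) k
    exact fun h ↦ hij (h (by simp [hik, hjk]))

variable (hN : Squarefree N) (hN1 : N ≠ 1)
include hN hN1

theorem card_filter_not_injective_finMulAntidiag_three :
    #{f ∈ finMulAntidiag 3 N | ¬Injective f} = 3 := by
  have himage : {f ∈ finMulAntidiag 3 N | ¬Injective f} = univ.image (Pi.mulSingle · N) := by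
    ext f
    simp only [mem_filter, mem_image, mem_univ, true_and]
    constructor
    · rintro ⟨hf, hf_inj⟩
      obtain ⟨k, rfl⟩ := (not_injective_iff_eq_mulSingle_of_mem_finMulAntidiag hN hf).1 hf_inj
      exact ⟨k, rfl⟩
    · rintro ⟨k, rfl⟩
      have hmem : Pi.mulSingle k N ∈ finMulAntidiag 3 N := by simp [hN.ne_zero]
      exact ⟨hmem, (not_injective_iff_eq_mulSingle_of_mem_finMulAntidiag hN hmem).2 ⟨k, rfl⟩⟩
  have hinj : Injective (Pi.mulSingle · N : Fin 3 → Fin 3 → ℕ) := by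
    intro k l hkl
    by_contra hne
    simpa [hne, hN1] using congrFun hkl k
  rw [himage, Finset.card_image_of_injective _ hinj, Finset.card_fin]

theorem filter_monotone_not_injective_finMulAntidiag_three :
    {f ∈ finMulAntidiag 3 N | Monotone f ∧ ¬Injective f} = {Pi.mulSingle 2 N} := by
  have hN0 := hN.ne_zero
  ext f
  simp only [mem_filter, mem_singleton]
  constructor
  · rintro ⟨hf, hf_mono, hf_inj⟩
    obtain ⟨k, rfl⟩ := (not_injective_iff_eq_mulSingle_of_mem_finMulAntidiag hN hf).1 hf_inj
    by_contra hk
    have hN_le : N ≤ 1 := by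
      simpa [show k ≠ 2 by rintro rfl; exact hk rfl] using hf_mono (Fin.le_last k)
    omega
  · rintro rfl
    have hmem : Pi.mulSingle 2 N ∈ finMulAntidiag 3 N := by simp [hN0]
    refine ⟨hmem, ?_, (not_injective_iff_eq_mulSingle_of_mem_finMulAntidiag hN hmem).2 ⟨2, rfl⟩⟩
    rw [Fin.monotone_iff_le_succ]
    intro i
    fin_cases i <;> simp [Nat.one_le_iff_ne_zero, hN0]

theorem six_mul_card_filter_monotone_finMulAntidiag_three :
    6 * #{f ∈ finMulAntidiag 3 N | Monotone f} = #(finMulAntidiag 3 N) + 3 := by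
  have hstrictMono_iff {f : Fin 3 → ℕ} : Monotone f ∧ Injective f ↔ StrictMono f :=
    ⟨fun h ↦ h.1.strictMono_of_injective h.2, fun h ↦ ⟨h.monotone, h.injective⟩⟩
  have hcard_inj : #{f ∈ finMulAntidiag 3 N | Injective f} =
      6 * #{f ∈ finMulAntidiag 3 N | StrictMono f} := by
    rw [Tuple.card_eq_factorial_mul_card_strictMono ?_ fun f hf ↦ (mem_filter.1 hf).2,
      filter_filter]
    · congr 2
      exact filter_congr fun f _ ↦ ⟨fun h ↦ h.2, fun h ↦ ⟨h.injective, h⟩⟩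
    · intro f hf σ
      obtain ⟨hf, hf_inj⟩ := mem_filter.1 hf
      refine mem_filter.2 ⟨mem_finMulAntidiag.2 ⟨?_, hN.ne_zero⟩, hf_inj.comp σ.injective⟩
      rw [comp_def, Equiv.prod_comp, prod_eq_of_mem_finMulAntidiag hf]
  have hcard_mono : #{f ∈ finMulAntidiag 3 N | Monotone f} =
      #{f ∈ finMulAntidiag 3 N | StrictMono f} + 1 := by
    rw [← card_filter_add_card_filter_not (s := {f ∈ finMulAntidiag 3 N | Monotone f}) Injective,
      filter_filter, filter_filter, filter_monotone_not_injective_finMulAntidiag_three hN hN1,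
      card_singleton, filter_congr fun f _ ↦ hstrictMono_iff]
  rw [← card_filter_add_card_filter_not (s := finMulAntidiag 3 N) Injective, hcard_inj,
    card_filter_not_injective_finMulAntidiag_three hN hN1, hcard_mono]
  ring

end Nat

theorem cuboidCount_eq_card_filter_monotone (N : ℕ) :
    cuboidCount N = #{f ∈ Nat.finMulAntidiag 3 N | Monotone f} := by
  have hinj : Injective fun f : Fin 3 → ℕ ↦ (f 0, f 1, f 2) := by
    intro f g hfg
    simp only [Prod.mk.injEq] at hfg
    ext i
    fin_cases i <;> simp [hfg]
  rw [cuboidCount, ← Set.ncard_coe_finset, ← Set.ncard_image_of_injective _ hinj]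
  congr 1
  ext ⟨a, b, c⟩
  simp only [Set.mem_ofPred_eq, Set.mem_image, coe_filter, Nat.mem_finMulAntidiag,
    Fin.prod_univ_three, Fin.monotone_iff_le_succ, Fin.forall_fin_two, Fin.castSucc_zero,
    Fin.succ_zero_eq_one, Fin.castSucc_one, Fin.succ_one_eq_two, Prod.mk.injEq]
  constructor
  · rintro ⟨ha, hab, hbc, rfl⟩
    have hbc_pos : 0 < b * c := Nat.mul_pos (by omega) (by omega)
    refine ⟨![a, b, c], ⟨⟨rfl, ?_⟩, hab, hbc⟩, rfl, rfl, rfl⟩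
    rw [mul_assoc]
    positivity
  · rintro ⟨f, ⟨⟨rfl, hN0⟩, h01, h12⟩, rfl, rfl, rfl⟩
    refine ⟨Nat.pos_of_ne_zero fun h ↦ hN0 (by simp [h]), h01, h12, rfl⟩

theorem cuboid_count_squarefree (n : ℕ) (hn : 1 ≤ n) (p : ℕ → ℕ) (N : ℕ)
    (hp : ∀ i < n, (p i).Prime) (hinj : ∀ i < n, ∀ j < n, p i = p j → i = j)
    (hN : N = ∏ i ∈ Finset.range n, p i) :
    (cuboidCount N : ℚ) = (3 ^ (n - 1) + 1) / 2 := by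
  have hs : ∀ q ∈ (range n).image p, q.Prime := by
    simpa using hp
  have hinjOn : Set.InjOn p (range n) := fun i hi j hj ↦ hinj i (mem_range.1 hi) j (mem_range.1 hj)
  have hN' : N = ∏ q ∈ (range n).image p, q := by
    rw [hN, prod_image hinjOn]
  have hω : ω N = n := by
    rw [hN', Nat.cardDistinctFactors_prod_of_prime hs, card_image_of_injOn hinjOn, card_range]
  have hsq : Squarefree N := hN' ▸ Nat.squarefree_prod_of_prime hs
  have hN1 : N ≠ 1 := by
    rintro rfl
    rw [ArithmeticFunction.cardDistinctFactors_one] at hω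
    omega
  have hcount : 6 * cuboidCount N = 3 ^ n + 3 := by
    rw [cuboidCount_eq_card_filter_monotone,
      Nat.six_mul_card_filter_monotone_finMulAntidiag_three hsq hN1,
      Nat.card_finMulAntidiag_of_squarefree hsq, hω]
  have hpow : 3 ^ n = 3 * 3 ^ (n - 1) := by
    rw [← pow_succ', Nat.sub_add_cancel hn]
  rw [eq_div_iff two_ne_zero]
  exact_mod_cast (by omega : cuboidCount N * 2 = 3 ^ (n - 1) + 1)
end

section
/- For a prime p and n ≡ 0 (mod 6), the number of triples (A,B,C) of positive integers with A ≤ B ≤ C and A·B·C = p^n equals (n² + 6n + 12)/12. -/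
open Finset

/-- Sorted exponent triples summing to `n`. -/
def expT (n : ℕ) : Finset (ℕ × ℕ × ℕ) :=
  ((range (n+1)) ×ˢ (range (n+1)) ×ˢ (range (n+1))).filter
    (fun t => t.1 ≤ t.2.1 ∧ t.2.1 ≤ t.2.2 ∧ t.1 + t.2.1 + t.2.2 = n)

lemma mem_expT {n : ℕ} {t : ℕ × ℕ × ℕ} :
    t ∈ expT n ↔ t.1 ≤ t.2.1 ∧ t.2.1 ≤ t.2.2 ∧ t.1 + t.2.1 + t.2.2 = n := by
  simp only [expT, mem_filter, mem_product, mem_range]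
  constructor
  · tauto
  · intro h
    refine ⟨⟨?_, ?_, ?_⟩, h⟩ <;> omega

lemma card_expT_succ3 (n : ℕ) :
    (expT (n+3)).card = (expT n).card + ((n+3)/2 + 1) := by
  have hset : expT (n+3) =
      (expT n).image (fun t => (t.1+1, t.2.1+1, t.2.2+1)) ∪
      (range ((n+3)/2 + 1)).image (fun b => (0, b, n+3-b)) := by
    ext ⟨a, b, c⟩
    simp only [mem_union, mem_image, mem_expT, mem_range, Prod.mk.injEq]
    constructor
    · rintro ⟨h1, h2, h3⟩
      rcases Nat.eq_zero_or_pos a with ha | ha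
      · right; exact ⟨b, by omega, by omega, by omega, by omega⟩
      · left
        refine ⟨(a-1, b-1, c-1), ⟨?_, ?_, ?_⟩, ?_, ?_, ?_⟩ <;> dsimp only <;> omega
    · rintro (⟨⟨x,y,z⟩, ⟨h1,h2,h3⟩, h4,h5,h6⟩ | ⟨x, hx, h1, h2, h3⟩)
      · dsimp only at h1 h2 h3 h4 h5 h6; omega
      · omega
  rw [hset, card_union_of_disjoint, card_image_of_injective, card_image_of_injective,
    card_range]
  · intro x y h
    simp only [Prod.mk.injEq] at h
    omega
  · intro x y h
    simp only [Prod.mk.injEq] at h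
    obtain ⟨x1,x2,x3⟩ := x
    obtain ⟨y1,y2,y3⟩ := y
    simp only [Prod.mk.injEq] at h ⊢
    omega
  · rw [disjoint_left]
    rintro ⟨a,b,c⟩ h1 h2
    simp only [mem_image, Prod.mk.injEq] at h1 h2
    obtain ⟨x, _, hx, _, _⟩ := h1
    obtain ⟨y, _, hy, _, _⟩ := h2
    omega

lemma card_expT_six (m : ℕ) : (expT (6*m)).card = 3*m^2 + 3*m + 1 := by
  induction m with
  | zero => decide
  | succ k ih =>
    have key : (expT (6*(k+1))).card = (expT (6*k)).card + (6*k+6) := by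
      have e1 : 6*(k+1) = (6*k+3)+3 := by ring
      rw [e1, card_expT_succ3, card_expT_succ3]
      omega
    have e2 : 3*(k+1)^2 + 3*(k+1) + 1 = 3*k^2+3*k+1 + (6*k+6) := by ring
    rw [key, ih, e2]

theorem cuboid_count_prime_pow (p n : ℕ) (hp : p.Prime) (hn : 0 < n)
    (hmod : n % 6 = 0) :
    (cuboidCount (p ^ n) : ℚ) = ((n : ℚ) ^ 2 + 6 * n + 12) / 12 := by
  obtain ⟨m, rfl⟩ : ∃ m, n = 6*m := ⟨n/6, by omega⟩
  have hp1 : 1 < p := hp.one_lt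
  have hpinj : Function.Injective (fun a : ℕ => p ^ a) := Nat.pow_right_injective hp.two_le
  have hS : {t : ℕ × ℕ × ℕ | 0 < t.1 ∧ t.1 ≤ t.2.1 ∧ t.2.1 ≤ t.2.2 ∧
      t.1 * t.2.1 * t.2.2 = p ^ (6*m)} =
      ↑((expT (6*m)).image (fun t => (p^t.1, p^t.2.1, p^t.2.2))) := by
    ext ⟨A, B, C⟩
    simp only [Set.mem_setOf_eq, coe_image, Set.mem_image, mem_coe, mem_expT, Prod.mk.injEq]
    constructor
    · rintro ⟨hA, hAB, hBC, habc⟩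
      have hAd : A ∣ p^(6*m) := ⟨B*C, by rw [← habc]; ring⟩
      have hBd : B ∣ p^(6*m) := ⟨A*C, by rw [← habc]; ring⟩
      have hCd : C ∣ p^(6*m) := ⟨A*B, by rw [← habc]; ring⟩
      obtain ⟨a, _, rfl⟩ := (Nat.dvd_prime_pow hp).1 hAd
      obtain ⟨b, _, rfl⟩ := (Nat.dvd_prime_pow hp).1 hBd
      obtain ⟨c, _, rfl⟩ := (Nat.dvd_prime_pow hp).1 hCd
      have hsum : a + b + c = 6*m := by
        apply hpinj
        simp only
        rw [pow_add, pow_add, ← habc]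
      exact ⟨(a, b, c),
        ⟨(Nat.pow_le_pow_iff_right hp1).1 hAB, (Nat.pow_le_pow_iff_right hp1).1 hBC, hsum⟩,
        rfl, rfl, rfl⟩
    · rintro ⟨⟨a, b, c⟩, ⟨h1, h2, h3⟩, rfl, rfl, rfl⟩
      refine ⟨pow_pos hp.pos a, Nat.pow_le_pow_right hp.pos h1,
        Nat.pow_le_pow_right hp.pos h2, ?_⟩
      rw [← pow_add, ← pow_add, h3]
  rw [cuboidCount, hS, Set.ncard_coe_finset,
    card_image_of_injective _ (fun x y h => by
      simp only [Prod.mk.injEq] at h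
      obtain ⟨x1,x2,x3⟩ := x; obtain ⟨y1,y2,y3⟩ := y
      simp only [Prod.mk.injEq] at h ⊢
      exact ⟨hpinj h.1, hpinj h.2.1, hpinj h.2.2⟩),
    card_expT_six]
  push_cast
  field_simp
  ring
end

section
/- Let p ≠ q be primes and n, m positive integers with n ≡ 2 or 4 (mod 6) and m ≡ 0, 2, or 4 (mod 6). Then the number of triples (A,B,C) of positive integers with A ≤ B ≤ C and A·B·C = p^n·q^m equals (n+2)(m+2)(nm+n+m+4)/24. -/
open Finset

section TripleSort
variable {α : Type*} [LinearOrder α]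

def sortTriple (t : α × α × α) : α × α × α :=
  if t.1 ≤ t.2.1 then
    if t.2.1 ≤ t.2.2 then t
    else if t.1 ≤ t.2.2 then (t.1, t.2.2, t.2.1)
    else (t.2.2, t.1, t.2.1)
  else
    if t.1 ≤ t.2.2 then (t.2.1, t.1, t.2.2)
    else if t.2.1 ≤ t.2.2 then (t.2.1, t.2.2, t.1)
    else (t.2.2, t.2.1, t.1)

def triplePerms : α × α × α → Finset (α × α × α)
  | (a, b, c) => {(a, b, c), (a, c, b), (b, a, c), (b, c, a), (c, a, b), (c, b, a)}

lemma sortTriple_mem_triplePerms (t : α × α × α) : sortTriple t ∈ triplePerms t := by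
  obtain ⟨a, b, c⟩ := t
  unfold sortTriple; split_ifs <;> simp [triplePerms]

lemma mem_triplePerms_sortTriple (t : α × α × α) : t ∈ triplePerms (sortTriple t) := by
  obtain ⟨a, b, c⟩ := t
  unfold sortTriple; split_ifs <;> simp [triplePerms]

lemma sortTriple_eq_of_mem_triplePerms {a b c : α} (hab : a ≤ b) (hbc : b ≤ c)
    {t : α × α × α} (ht : t ∈ triplePerms (a, b, c)) : sortTriple t = (a, b, c) := by
  simp only [triplePerms, mem_insert, mem_singleton] at ht
  rcases ht with rfl | rfl | rfl | rfl | rfl | rfl <;> unfold sortTriple <;> dsimp only <;>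
    split_ifs <;> ext <;> dsimp only <;> order

lemma sortTriple_sorted (t : α × α × α) :
    (sortTriple t).1 ≤ (sortTriple t).2.1 ∧ (sortTriple t).2.1 ≤ (sortTriple t).2.2 := by
  unfold sortTriple; split_ifs <;> constructor <;> order

lemma card_triplePerms_add {a b c : α} (hab : a ≤ b) (hbc : b ≤ c) :
    #(triplePerms (a, b, c)) + 3 * #{t ∈ triplePerms (a, b, c) | t.1 = t.2.1}
      + 2 * #{t ∈ triplePerms (a, b, c) | t.1 = t.2.1 ∧ t.2.1 = t.2.2} = 6 := by
  rcases hab.lt_or_eq with hab | rfl <;> rcases hbc.lt_or_eq with hbc | rfl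
  · have hac := hab.trans hbc
    simp [triplePerms, filter_insert, filter_singleton, hab.ne, hbc.ne, hac.ne, hab.ne', hbc.ne',
      hac.ne']
  · simp [triplePerms, filter_insert, filter_singleton, hab.ne, hab.ne']
  · simp [triplePerms, filter_insert, filter_singleton, hbc.ne, hbc.ne']
  · simp [triplePerms, filter_singleton]

theorem six_mul_card_filter_sorted {T : Finset (α × α × α)}
    (hT : ∀ t ∈ T, triplePerms t ⊆ T) :
    6 * #{t ∈ T | t.1 ≤ t.2.1 ∧ t.2.1 ≤ t.2.2} =
      #T + 3 * #{t ∈ T | t.1 = t.2.1} + 2 * #{t ∈ T | t.1 = t.2.1 ∧ t.2.1 = t.2.2} := by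
  set S := {t ∈ T | t.1 ≤ t.2.1 ∧ t.2.1 ≤ t.2.2}
  have hfiber : ∀ s ∈ S, {t ∈ T | sortTriple t = s} = triplePerms s := by
    rintro ⟨a, b, c⟩ hs
    obtain ⟨hsT, hab, hbc⟩ := mem_filter.1 hs
    ext t
    refine ⟨fun ht => ?_, fun ht =>
      mem_filter.2 ⟨hT _ hsT ht, sortTriple_eq_of_mem_triplePerms hab hbc ht⟩⟩
    rw [← (mem_filter.1 ht).2]
    exact mem_triplePerms_sortTriple t
  have hcount : ∀ (P : α × α × α → Prop) [DecidablePred P],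
      #{t ∈ T | P t} = ∑ s ∈ S, #{t ∈ triplePerms s | P t} := by
    intro P _
    have hmaps : ∀ t ∈ {t ∈ T | P t}, sortTriple t ∈ S := fun t ht =>
      have htT := (mem_filter.1 ht).1
      mem_filter.2 ⟨hT t htT (sortTriple_mem_triplePerms t), sortTriple_sorted t⟩
    rw [card_eq_sum_card_fiberwise hmaps]
    exact sum_congr rfl fun s hs => by rw [filter_comm, hfiber s hs]
  calc 6 * #S = ∑ s ∈ S, 6 := by rw [sum_const, smul_eq_mul, mul_comm]
    _ = ∑ s ∈ S, (#(triplePerms s) + 3 * #{t ∈ triplePerms s | t.1 = t.2.1}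
          + 2 * #{t ∈ triplePerms s | t.1 = t.2.1 ∧ t.2.1 = t.2.2}) := by
      refine sum_congr rfl fun ⟨a, b, c⟩ hs => ?_
      obtain ⟨-, hab, hbc⟩ := mem_filter.1 hs
      exact (card_triplePerms_add hab hbc).symm
    _ = _ := by
      rw [sum_add_distrib, sum_add_distrib, ← mul_sum, ← mul_sum, ← hcount, ← hcount]
      simpa using (hcount fun _ => True).symm

end TripleSort

def mulTriples (N : ℕ) : Finset (ℕ × ℕ × ℕ) :=
  {t ∈ N.divisors ×ˢ N.divisors ×ˢ N.divisors | t.1 * t.2.1 * t.2.2 = N}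

def sumTriples (n : ℕ) : Finset (ℕ × ℕ × ℕ) :=
  {t ∈ range (n + 1) ×ˢ range (n + 1) ×ˢ range (n + 1) | t.1 + t.2.1 + t.2.2 = n}

lemma mem_mulTriples {N : ℕ} (hN : N ≠ 0) {t : ℕ × ℕ × ℕ} :
    t ∈ mulTriples N ↔ t.1 * t.2.1 * t.2.2 = N := by
  obtain ⟨a, b, c⟩ := t
  simp only [mulTriples, mem_filter, mem_product, Nat.mem_divisors, and_iff_right_iff_imp]
  rintro rfl
  exact ⟨⟨⟨b * c, by ring⟩, hN⟩, ⟨⟨a * c, by ring⟩, hN⟩, ⟨a * b, by ring⟩, hN⟩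

lemma mem_sumTriples {n : ℕ} {t : ℕ × ℕ × ℕ} : t ∈ sumTriples n ↔ t.1 + t.2.1 + t.2.2 = n := by
  simp only [sumTriples, mem_filter, mem_product, mem_range, and_iff_right_iff_imp]
  omega

lemma triplePerms_subset_mulTriples {N : ℕ} (hN : N ≠ 0) {t : ℕ × ℕ × ℕ}
    (ht : t ∈ mulTriples N) : triplePerms t ⊆ mulTriples N := by
  obtain ⟨a, b, c⟩ := t
  intro s hs
  simp only [triplePerms, mem_insert, mem_singleton] at hs
  rw [mem_mulTriples hN] at ht ⊢
  rcases hs with rfl | rfl | rfl | rfl | rfl | rfl <;> rw [← ht] <;> ring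

lemma cuboidCount_eq_card {N : ℕ} (hN : N ≠ 0) :
    cuboidCount N = #{t ∈ mulTriples N | t.1 ≤ t.2.1 ∧ t.2.1 ≤ t.2.2} := by
  rw [cuboidCount, ← Set.ncard_coe_finset]
  congr 1
  ext ⟨a, b, c⟩
  simp only [Set.mem_ofPred_eq, coe_filter, mem_mulTriples hN]
  refine ⟨fun ⟨_, hab, hbc, h⟩ => ⟨h, hab, hbc⟩, fun ⟨h, hab, hbc⟩ => ⟨?_, hab, hbc, h⟩⟩
  rw [Nat.pos_iff_ne_zero]
  rintro rfl
  simp [← h] at hN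

lemma card_sumTriples (n : ℕ) : #(sumTriples n) = (n + 2).choose 2 := by
  have hmaps : ∀ t ∈ sumTriples n, t.1 + t.2.1 ∈ range (n + 1) := fun t ht => by
    rw [mem_sumTriples] at ht; rw [mem_range]; omega
  have hfiber : ∀ i ∈ range (n + 1), #{t ∈ sumTriples n | t.1 + t.2.1 = i} = i + 1 := by
    intro i hi
    rw [mem_range] at hi
    have : {t ∈ sumTriples n | t.1 + t.2.1 = i} =
        (antidiagonal i).image fun x => (x.1, x.2, n - i) := by
      ext ⟨a, b, c⟩
      simp only [mem_filter, mem_sumTriples, mem_image, HasAntidiagonal.mem_antidiagonal,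
        Prod.mk.injEq, Prod.exists]
      constructor
      · rintro ⟨h, rfl⟩; exact ⟨a, b, rfl, rfl, rfl, by omega⟩
      · rintro ⟨a, b, rfl, rfl, rfl, rfl⟩; omega
    have hinj : Function.Injective fun x : ℕ × ℕ => (x.1, x.2, n - i) := fun x y h => by
      simp only [Prod.mk.injEq] at h
      exact Prod.ext h.1 h.2.1
    rw [this, card_image_of_injective _ hinj, Nat.card_antidiagonal]
  rw [card_eq_sum_card_fiberwise hmaps, sum_congr rfl hfiber]
  simpa using Nat.sum_range_add_choose n 1

lemma card_sumTriples_filter_fst_eq (n : ℕ) : #{t ∈ sumTriples n | t.1 = t.2.1} = n / 2 + 1 := by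
  have : {t ∈ sumTriples n | t.1 = t.2.1} =
      (range (n / 2 + 1)).image fun i => (i, i, n - 2 * i) := by
    ext ⟨a, b, c⟩
    simp only [mem_filter, mem_sumTriples, mem_image, mem_range, Prod.mk.injEq]
    constructor
    · rintro ⟨h, rfl⟩; exact ⟨a, by omega, rfl, rfl, by omega⟩
    · rintro ⟨i, hi, rfl, rfl, rfl⟩; omega
  rw [this, card_image_of_injective _ fun i j h => (Prod.mk.inj h).1, card_range]

lemma sumTriples_filter_const_eq_empty {n : ℕ} (hn : ¬ 3 ∣ n) :
    {t ∈ sumTriples n | t.1 = t.2.1 ∧ t.2.1 = t.2.2} = ∅ :=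
  filter_eq_empty_iff.2 fun t ht h => hn ⟨t.1, by rw [mem_sumTriples] at ht; omega⟩

def powTriple (p q : ℕ) (e : (ℕ × ℕ × ℕ) × (ℕ × ℕ × ℕ)) : ℕ × ℕ × ℕ :=
  (p ^ e.1.1 * q ^ e.2.1, p ^ e.1.2.1 * q ^ e.2.2.1, p ^ e.1.2.2 * q ^ e.2.2.2)

section TwoPrimes

variable {p q : ℕ}

lemma exists_eq_pow_mul_pow_of_dvd (hp : p.Prime) (hq : q.Prime) {n m A : ℕ}
    (h : A ∣ p ^ n * q ^ m) : ∃ i j, A = p ^ i * q ^ j := by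
  obtain ⟨y, z, hy, hz, rfl⟩ := Nat.dvd_mul.1 h
  obtain ⟨i, -, rfl⟩ := (Nat.dvd_prime_pow hp).1 hy
  obtain ⟨j, -, rfl⟩ := (Nat.dvd_prime_pow hq).1 hz
  exact ⟨i, j, rfl⟩

variable (hp : p.Prime) (hq : q.Prime) (hpq : p ≠ q)
include hp hq hpq

lemma factorization_pow_mul_pow_left (i j : ℕ) : (p ^ i * q ^ j).factorization p = i := by
  simp [Nat.factorization_mul, hp.ne_zero, hq.ne_zero, hp.factorization_pow, hq.factorization_pow,
    hpq.symm]

lemma pow_mul_pow_inj {i j k l : ℕ} : p ^ i * q ^ j = p ^ k * q ^ l ↔ i = k ∧ j = l := by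
  refine ⟨fun h => ⟨?_, ?_⟩, fun ⟨hik, hjl⟩ => hik ▸ hjl ▸ rfl⟩
  · simpa only [factorization_pow_mul_pow_left hp hq hpq] using congrArg (·.factorization p) h
  · simpa only [mul_comm (p ^ _), factorization_pow_mul_pow_left hq hp hpq.symm]
      using congrArg (·.factorization q) h

lemma powTriple_injective : Function.Injective (powTriple p q) := by
  rintro ⟨⟨i₁, i₂, i₃⟩, j₁, j₂, j₃⟩ ⟨⟨k₁, k₂, k₃⟩, l₁, l₂, l₃⟩ h
  simp only [powTriple, Prod.mk.injEq, pow_mul_pow_inj hp hq hpq] at h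
  simp only [Prod.mk.injEq]
  tauto

lemma mulTriples_pow_mul_pow (n m : ℕ) :
    mulTriples (p ^ n * q ^ m) = (sumTriples n ×ˢ sumTriples m).image (powTriple p q) := by
  have hN : p ^ n * q ^ m ≠ 0 := mul_ne_zero (pow_ne_zero _ hp.ne_zero) (pow_ne_zero _ hq.ne_zero)
  ext ⟨A, B, C⟩
  simp only [mem_mulTriples hN, mem_image, mem_product, mem_sumTriples, Prod.exists, powTriple,
    Prod.mk.injEq]
  constructor
  · intro h
    have hdvd : ∀ X, X ∣ A * B * C → ∃ i j, X = p ^ i * q ^ j := fun X hX =>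
      exists_eq_pow_mul_pow_of_dvd hp hq (h ▸ hX)
    obtain ⟨i₁, j₁, rfl⟩ := hdvd A ⟨B * C, by ring⟩
    obtain ⟨i₂, j₂, rfl⟩ := hdvd B ⟨p ^ i₁ * q ^ j₁ * C, by ring⟩
    obtain ⟨i₃, j₃, rfl⟩ := hdvd C (dvd_mul_left _ _)
    have hexp : p ^ (i₁ + i₂ + i₃) * q ^ (j₁ + j₂ + j₃) = p ^ n * q ^ m := by rw [← h]; ring
    obtain ⟨rfl, rfl⟩ := (pow_mul_pow_inj hp hq hpq).1 hexp
    exact ⟨_, _, _, _, _, _, ⟨rfl, rfl⟩, rfl, rfl, rfl⟩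
  · rintro ⟨i₁, i₂, i₃, j₁, j₂, j₃, ⟨rfl, rfl⟩, rfl, rfl, rfl⟩
    ring

lemma card_mulTriples_pow_mul_pow (n m : ℕ) :
    #(mulTriples (p ^ n * q ^ m)) = #(sumTriples n) * #(sumTriples m) := by
  rw [mulTriples_pow_mul_pow hp hq hpq, card_image_of_injective _ (powTriple_injective hp hq hpq),
    card_product]

lemma card_filter_mulTriples_pow_mul_pow (n m : ℕ) (P : ℕ × ℕ × ℕ → Prop) [DecidablePred P]
    (Q R : ℕ × ℕ × ℕ → Prop) [DecidablePred Q] [DecidablePred R]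
    (hP : ∀ e f, P (powTriple p q (e, f)) ↔ Q e ∧ R f) :
    #{t ∈ mulTriples (p ^ n * q ^ m) | P t} =
      #{e ∈ sumTriples n | Q e} * #{f ∈ sumTriples m | R f} := by
  rw [mulTriples_pow_mul_pow hp hq hpq, filter_image,
    card_image_of_injective _ (powTriple_injective hp hq hpq), ← card_product, ← filter_product]
  exact congrArg card (filter_congr fun ⟨e, f⟩ _ => hP e f)

end TwoPrimes

theorem cuboid_count_two_primes_general (p q n m : ℕ) (hp : p.Prime) (hq : q.Prime)
    (hpq : p ≠ q)
    (hnmod : n % 6 = 2 ∨ n % 6 = 4) (hmmod : m % 6 = 0 ∨ m % 6 = 2 ∨ m % 6 = 4) :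
    (cuboidCount (p ^ n * q ^ m) : ℚ) = ((n : ℚ) + 2) * ((m : ℚ) + 2) * ((n : ℚ) * m + n + m + 4) / 24 := by
  have hN : p ^ n * q ^ m ≠ 0 := mul_ne_zero (pow_ne_zero _ hp.ne_zero) (pow_ne_zero _ hq.ne_zero)
  have hdiag : #{t ∈ mulTriples (p ^ n * q ^ m) | t.1 = t.2.1} = (n / 2 + 1) * (m / 2 + 1) := by
    rw [card_filter_mulTriples_pow_mul_pow hp hq hpq n m _ (fun e => e.1 = e.2.1)
      (fun f => f.1 = f.2.1) fun _ _ => pow_mul_pow_inj hp hq hpq,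
      card_sumTriples_filter_fst_eq, card_sumTriples_filter_fst_eq]
  have hconst : #{t ∈ mulTriples (p ^ n * q ^ m) | t.1 = t.2.1 ∧ t.2.1 = t.2.2} = 0 := by
    rw [card_filter_mulTriples_pow_mul_pow hp hq hpq n m _
      (fun e => e.1 = e.2.1 ∧ e.2.1 = e.2.2) (fun f => f.1 = f.2.1 ∧ f.2.1 = f.2.2)
      fun _ _ => by simp only [powTriple, pow_mul_pow_inj hp hq hpq, and_and_and_comm],
      sumTriples_filter_const_eq_empty (by omega), card_empty, zero_mul]
  have hcount := six_mul_card_filter_sorted fun _ => triplePerms_subset_mulTriples hN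
  rw [← cuboidCount_eq_card hN, card_mulTriples_pow_mul_pow hp hq hpq, card_sumTriples,
    card_sumTriples, hdiag, hconst] at hcount
  have hn2 : ((n / 2 : ℕ) : ℚ) = n / 2 := Nat.cast_div (by omega) two_ne_zero
  have hm2 : ((m / 2 : ℕ) : ℚ) = m / 2 := Nat.cast_div (by omega) two_ne_zero
  have hcountℚ := congrArg (Nat.cast : ℕ → ℚ) hcount
  push_cast [Nat.cast_choose_two, hn2, hm2] at hcountℚ
  linear_combination hcountℚ / 6

theorem cuboid_count_two_primes (p q n m : ℕ) (hp : p.Prime) (hq : q.Prime)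
    (hpq : p ≠ q) (hn : 0 < n) (hm : 0 < m)
    (hnmod : n % 6 = 2 ∨ n % 6 = 4) (hmmod : m % 6 = 0 ∨ m % 6 = 2 ∨ m % 6 = 4) :
    (cuboidCount (p ^ n * q ^ m) : ℚ) = ((n : ℚ) + 2) * ((m : ℚ) + 2) * ((n : ℚ) * m + n + m + 4) / 24 :=
  cuboid_count_two_primes_general p q n m hp hq hpq hnmod hmmod
end
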